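/- arXiv:2006.01678 — 2 statements merged into one kernel-verified Lean document; each statement's English description precedes it below -/
import Mathlib

section
/- Let X be a connected bipartite graph with bipartition parts P and Q, let α be a vertex of X, and let (Ω,S) be a coherent configuration on the vertex set Ω of X that is compatible with X and in which α is distinguished (i.e., {(α,α)} ∈ S). Then every fiber of (Ω,S) is contained in P or contained in Q; in particular, for every fiber Δ, the subgraph of X induced by Δ has no edges. -/
open SimpleGraph

/-- A coherent configuration on a set `Ω`: a partition `S` of `Ω × Ω` into nonempty
binary relations such that the diagonal is a union of elements of `S`, the converse of
every element of `S` belongs to `S`, and the intersection numbers are well defined. -/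
structure CoherentConfiguration (Ω : Type*) where
  S : Set (Set (Ω × Ω))
  nonempty_mem : ∀ s ∈ S, s.Nonempty
  partition : ∀ p : Ω × Ω, ∃! s, s ∈ S ∧ p ∈ s
  diag_union : ∀ s ∈ S, (∃ p ∈ s, p.1 = p.2) → ∀ p ∈ s, p.1 = p.2
  converse_mem : ∀ s ∈ S, {p : Ω × Ω | (p.2, p.1) ∈ s} ∈ S
  regularity : ∀ r ∈ S, ∀ s ∈ S, ∀ t ∈ S, ∀ p ∈ t, ∀ q ∈ t,
    {γ : Ω | (p.1, γ) ∈ r ∧ (γ, p.2) ∈ s}.ncard =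
      {γ : Ω | (q.1, γ) ∈ r ∧ (γ, q.2) ∈ s}.ncard

/-- `Δ` is a fiber of the coherent configuration, i.e. `{(δ,δ) : δ ∈ Δ} ∈ S`. -/
def CoherentConfiguration.IsFiber {Ω : Type*} (C : CoherentConfiguration Ω)
    (Δ : Set Ω) : Prop :=
  {p : Ω × Ω | p.1 = p.2 ∧ p.1 ∈ Δ} ∈ C.S

/-- The coherent configuration is compatible with the graph `X`: the arc set of `X`
is a union of elements of `S`. -/
def CoherentConfiguration.Compatible {Ω : Type*} (C : CoherentConfiguration Ω)
    (X : SimpleGraph Ω) : Prop :=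
  ∀ s ∈ C.S, (∃ p ∈ s, X.Adj p.1 p.2) → ∀ p ∈ s, X.Adj p.1 p.2

/-- The vertex `α` is distinguished in the coherent configuration: `{(α,α)} ∈ S`. -/
def CoherentConfiguration.Distinguished {Ω : Type*} (C : CoherentConfiguration Ω)
    (α : Ω) : Prop :=
  ({(α, α)} : Set (Ω × Ω)) ∈ C.S

/-- `P`, `Q` form a bipartition of the graph `X`. -/
def IsBipartition {V : Type*} (X : SimpleGraph V) (P Q : Set V) : Prop :=
  (∀ v, v ∈ P ∨ v ∈ Q) ∧ Disjoint P Q ∧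
    ∀ u v, X.Adj u v → (u ∈ P ∧ v ∈ Q) ∨ (u ∈ Q ∧ v ∈ P)

/-- `X` contains no induced cycle of length at least 6. -/
def NoLongInducedCycle {V : Type*} (X : SimpleGraph V) : Prop :=
  ∀ n : ℕ, 6 ≤ n → IsEmpty (SimpleGraph.cycleGraph n ↪g X)

/-- The equivalence relation `e_{Δ,Γ}` on `Δ`: two vertices of `Δ` are equivalent iff
they have the same neighbors in `Γ`; viewed as a set of pairs. -/
def eRel {V : Type*} (X : SimpleGraph V) (Δ Γ : Set V) : Set (V × V) :=
  {p | p.1 ∈ Δ ∧ p.2 ∈ Δ ∧ X.neighborSet p.1 ∩ Γ = X.neighborSet p.2 ∩ Γ}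

/-- The number `‖e_{Δ,Γ}‖` of classes of the equivalence relation `e_{Δ,Γ}`,
i.e. the number of distinct sets of the form `N(δ) ∩ Γ` for `δ ∈ Δ`. -/
noncomputable def numClasses {V : Type*} (X : SimpleGraph V) (Δ Γ : Set V) : ℕ :=
  ((fun δ => X.neighborSet δ ∩ Γ) '' Δ).ncard

/-!
Since `α` is distinguished, the intersection numbers with `{(α, α)}` show that every
relation containing a pair `(α, β)` lies in `{α} × Ω`, and those with the converse relation
show that for a fiber `Δ` the whole of `{α} × Δ` is one relation. Compatibility makes the
distance from `α` constant on such a relation: by induction on the distance, a neighbour `γ`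
of `δ` one step closer to `α` is transported, through the relations of `(α, γ)` and `(γ, δ)`,
to a neighbour of `δ'` equally close. So a fiber sits at a single distance from `α`, and in a
connected bipartite graph the parity of that distance determines the side.
-/

namespace SimpleGraph

variable {V : Type*} {G : SimpleGraph V}

lemma Reachable.exists_adj_dist_add_one_eq {u v : V} (h : G.Reachable u v) (hne : u ≠ v) :
    ∃ w, G.Adj v w ∧ G.dist u w + 1 = G.dist u v := by
  obtain ⟨p, hp⟩ := h.symm.exists_walk_length_eq_dist
  cases p with
  | nil => exact absurd rfl hne
  | @cons _ w _ hadj q =>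
    refine ⟨w, hadj, le_antisymm ?_ ?_⟩
    · rw [Walk.length_cons, dist_comm] at hp
      rw [dist_comm]
      have := dist_le q
      omega
    · calc G.dist u v ≤ G.dist u w + G.dist w v := hadj.symm.reachable.dist_triangle_right u
        _ = G.dist u w + 1 := by rw [dist_eq_one_iff_adj.mpr hadj.symm]

end SimpleGraph

namespace IsBipartition

variable {V : Type*} {X : SimpleGraph V} {P Q : Set V}

open scoped Classical in
noncomputable def coloring (hbip : IsBipartition X P Q) : X.Coloring Bool :=
  Coloring.mk (fun v => decide (v ∈ P)) fun {u v} hadj => by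
    rcases hbip.2.2 u v hadj with ⟨hu, hv⟩ | ⟨hu, hv⟩
    · simp [hu, Set.disjoint_right.mp hbip.2.1 hv]
    · simp [hv, Set.disjoint_right.mp hbip.2.1 hu]

open scoped Classical in
lemma coloring_apply (hbip : IsBipartition X P Q) (v : V) : hbip.coloring v = decide (v ∈ P) :=
  rfl

lemma mem_iff_mem_of_dist_eq (hbip : IsBipartition X P Q) (hconn : X.Connected) {a u v : V}
    (h : X.dist a u = X.dist a v) : u ∈ P ↔ v ∈ P := by
  obtain ⟨p, hp⟩ := (hconn.preconnected a u).exists_walk_length_eq_dist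
  obtain ⟨q, hq⟩ := (hconn.preconnected a v).exists_walk_length_eq_dist
  have hpu := hbip.coloring.even_length_iff_congr p
  have hqv := hbip.coloring.even_length_iff_congr q
  rw [hp, h, ← hq, hqv] at hpu
  simp only [coloring_apply, decide_eq_true_eq] at hpu
  tauto

lemma subset_or_subset (hbip : IsBipartition X P Q) {Δ : Set V}
    (h : ∀ u ∈ Δ, ∀ v ∈ Δ, u ∈ P ↔ v ∈ P) : Δ ⊆ P ∨ Δ ⊆ Q := by
  by_cases hP : ∃ u ∈ Δ, u ∈ P
  · obtain ⟨u, hu, huP⟩ := hP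
    exact .inl fun v hv => (h u hu v hv).mp huP
  · simp only [not_exists, not_and] at hP
    exact .inr fun v hv => (hbip.1 v).resolve_left (hP v hv)

lemma not_adj (hbip : IsBipartition X P Q) {u v : V} (h : u ∈ P ↔ v ∈ P) : ¬ X.Adj u v := by
  intro hadj
  rcases hbip.2.2 u v hadj with ⟨hu, hv⟩ | ⟨hu, hv⟩
  · exact Set.disjoint_left.mp hbip.2.1 (h.mp hu) hv
  · exact Set.disjoint_left.mp hbip.2.1 (h.mpr hv) hu

end IsBipartition

namespace CoherentConfiguration

variable {Ω : Type*} {C : CoherentConfiguration Ω} {α : Ω}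

lemma eq_of_distinguished (hdist : C.Distinguished α) {s : Set (Ω × Ω)} (hs : s ∈ C.S)
    (hα : (α, α) ∈ s) {δ : Ω} (hδ : (α, δ) ∈ s) : δ = α := by
  obtain ⟨u, -, huniq⟩ := C.partition (α, α)
  have hsα : s = {(α, α)} := (huniq s ⟨hs, hα⟩).trans (huniq _ ⟨hdist, rfl⟩).symm
  rw [hsα] at hδ
  exact (Prod.ext_iff.mp hδ).2

variable [Finite Ω]

lemma exists_middle_of_mem {r s t : Set (Ω × Ω)} (hr : r ∈ C.S) (hs : s ∈ C.S) (ht : t ∈ C.S)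
    {p q : Ω × Ω} (hp : p ∈ t) (hq : q ∈ t) (h : ∃ γ, (p.1, γ) ∈ r ∧ (γ, p.2) ∈ s) :
    ∃ γ, (q.1, γ) ∈ r ∧ (γ, q.2) ∈ s := by
  have hpos : 0 < {γ | (p.1, γ) ∈ r ∧ (γ, p.2) ∈ s}.ncard := (Set.ncard_pos (Set.toFinite _)).mpr h
  rw [C.regularity r hr s hs t ht p hp q hq] at hpos
  exact Set.nonempty_of_ncard_ne_zero hpos.ne'

lemma fst_eq_of_distinguished (hdist : C.Distinguished α) {s : Set (Ω × Ω)} (hs : s ∈ C.S)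
    {β : Ω} (hβ : (α, β) ∈ s) {p : Ω × Ω} (hp : p ∈ s) : p.1 = α := by
  obtain ⟨γ, hγ, -⟩ := exists_middle_of_mem hdist hs hs hβ hp ⟨α, rfl, hβ⟩
  exact (Prod.ext_iff.mp hγ).1

lemma mem_of_isFiber (hdist : C.Distinguished α) {Δ : Set Ω} (hΔ : C.IsFiber Δ)
    {δ δ' : Ω} (hδ : δ ∈ Δ) (hδ' : δ' ∈ Δ) {s : Set (Ω × Ω)} (hs : s ∈ C.S)
    (hαδ : (α, δ) ∈ s) : (α, δ') ∈ s := by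
  obtain ⟨γ, -, hγ⟩ := exists_middle_of_mem (C.converse_mem s hs) hs hΔ
    (p := (δ, δ)) (q := (δ', δ')) ⟨rfl, hδ⟩ ⟨rfl, hδ'⟩ ⟨α, hαδ, hαδ⟩
  obtain rfl : γ = α := fst_eq_of_distinguished hdist hs hαδ hγ
  exact hγ

lemma dist_le_of_mem {X : SimpleGraph Ω} (hconn : X.Connected) (hcomp : C.Compatible X)
    (hdist : C.Distinguished α) {s : Set (Ω × Ω)} (hs : s ∈ C.S) {δ δ' : Ω}
    (hδ : (α, δ) ∈ s) (hδ' : (α, δ') ∈ s) : X.dist α δ' ≤ X.dist α δ := by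
  induction hk : X.dist α δ generalizing s δ δ' with
  | zero =>
    rw [hconn.dist_eq_zero_iff] at hk
    subst hk
    rw [eq_of_distinguished hdist hs hδ hδ', SimpleGraph.dist_self]
  | succ k ih =>
    have hne : α ≠ δ := fun h => by simp [h] at hk
    obtain ⟨γ, hadj, hγ⟩ := (hconn.preconnected α δ).exists_adj_dist_add_one_eq hne
    obtain ⟨r, ⟨hr, hαγ⟩, -⟩ := C.partition (α, γ)
    obtain ⟨t, ⟨ht, hγδ⟩, -⟩ := C.partition (γ, δ)
    obtain ⟨x, hαx, hxδ'⟩ := exists_middle_of_mem hr ht hs hδ hδ' ⟨γ, hαγ, hγδ⟩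
    have hx : X.dist α x ≤ k := ih hr hαγ hαx (by omega)
    have hxadj : X.Adj x δ' := hcomp t ht ⟨_, hγδ, hadj.symm⟩ _ hxδ'
    calc X.dist α δ' ≤ X.dist α x + X.dist x δ' := hconn.dist_triangle
      _ ≤ k + 1 := by rw [dist_eq_one_iff_adj.mpr hxadj]; omega

lemma dist_eq_of_mem {X : SimpleGraph Ω} (hconn : X.Connected) (hcomp : C.Compatible X)
    (hdist : C.Distinguished α) {s : Set (Ω × Ω)} (hs : s ∈ C.S) {δ δ' : Ω}
    (hδ : (α, δ) ∈ s) (hδ' : (α, δ') ∈ s) : X.dist α δ = X.dist α δ' :=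
  le_antisymm (dist_le_of_mem hconn hcomp hdist hs hδ' hδ)
    (dist_le_of_mem hconn hcomp hdist hs hδ hδ')

end CoherentConfiguration

open CoherentConfiguration in
theorem stmt_4 {Ω : Type*} [Fintype Ω] (X : SimpleGraph Ω) (P Q : Set Ω)
    (hconn : X.Connected) (hbip : IsBipartition X P Q)
    (α : Ω) (C : CoherentConfiguration Ω)
    (hcomp : C.Compatible X) (hdist : C.Distinguished α) :
    ∀ Δ : Set Ω, C.IsFiber Δ →
      (Δ ⊆ P ∨ Δ ⊆ Q) ∧ ∀ u ∈ Δ, ∀ v ∈ Δ, ¬ X.Adj u v := by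
  intro Δ hΔ
  have hdist_eq : ∀ u ∈ Δ, ∀ v ∈ Δ, X.dist α u = X.dist α v := by
    intro u hu v hv
    obtain ⟨s, ⟨hs, hαu⟩, -⟩ := C.partition (α, u)
    exact dist_eq_of_mem hconn hcomp hdist hs hαu (mem_of_isFiber hdist hΔ hu hv hs hαu)
  have hside : ∀ u ∈ Δ, ∀ v ∈ Δ, u ∈ P ↔ v ∈ P := fun u hu v hv =>
    hbip.mem_iff_mem_of_dist_eq hconn (hdist_eq u hu v hv)
  exact ⟨hbip.subset_or_subset hside, fun u hu v hv => hbip.not_adj (hside u hu v hv)⟩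
end

section
/- Let X be a connected chordal bipartite graph, let α be a vertex of X, and let (Ω,S) be a coherent configuration on the vertex set Ω of X compatible with X in which α is distinguished. Let Δ and Γ be distinct fibers of (Ω,S) such that at least one edge of X joins Δ to Γ. Then there exist integers a,b ≥ 1 such that every connected component C of the subgraph of X induced by Δ ∪ Γ satisfies |C∩Δ| = a, |C∩Γ| = b, and every vertex of C∩Δ is adjacent to every vertex of C∩Γ; moreover, the number of connected components of this induced subgraph equals ‖e_{Δ,Γ}‖. In other words, the induced subgraph is isomorphic to mK_{a,b} with m = ‖e_{Δ,Γ}‖. -/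
open SimpleGraph

/-!
Since `α` is distinguished, `{α} × Δ` is a basis relation for every fiber `Δ`. The relations
"joined by a walk of length `k`" are unions of basis relations, so all vertices of a fiber are
reached from `α` by walks of a common length; by bipartiteness fibers are independent sets. The
arc set is a union of basis relations too, so every vertex of `Δ` has the same number of
neighbours in `Γ`, and vice versa.

In such a biregular bipartite graph between `Δ` and `Γ` without long induced cycles, an induced
path `f 0, f 1, …, f m` alternating between the two sides can always be prolonged at `f 0`: a
neighbour of `f 0` that sees a later vertex closes an induced cycle, of length at least six unless
it sees `f 2`; as `f 0` and `f 2` have equally many neighbours and `f 3` is a neighbour of `f 2`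
only, some neighbour of `f 0` sees no later vertex. By finiteness there is thus no induced path on
four vertices, so each component of `X[Δ ∪ Γ]` is complete bipartite; its sides are neighbourhoods,
whose sizes are fixed by biregularity and which are in bijection with the classes of `e_{Δ,Γ}`.
-/

section

variable {V : Type*}

lemma SimpleGraph.IsIndepSet.not_adj {G : SimpleGraph V} {s : Set V} (h : G.IsIndepSet s)
    {u v : V} (hu : u ∈ s) (hv : v ∈ s) : ¬G.Adj u v :=
  fun huv => h hu hv huv.ne huv

lemma SimpleGraph.Reachable.mem_of_adj_closed {G : SimpleGraph V} {S : Set V}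
    (hS : ∀ x y, x ∈ S → G.Adj x y → y ∈ S) {u v : V} (h : G.Reachable u v) (hu : u ∈ S) :
    v ∈ S := by
  have h' := (reachable_iff_reflTransGen u v).mp h
  clear h
  induction h' with
  | refl => exact hu
  | tail _ hxy ih => exact hS _ _ ih hxy

lemma SimpleGraph.exists_walk_length_add_one_iff {G : SimpleGraph V} {u v : V} {k : ℕ} :
    (∃ w : G.Walk u v, w.length = k + 1) ↔ ∃ γ, G.Adj u γ ∧ ∃ w : G.Walk γ v, w.length = k := by
  constructor
  · rintro ⟨_ | ⟨h, w⟩, hw⟩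
    · simp at hw
    · exact ⟨_, h, w, by simpa using hw⟩
  · rintro ⟨γ, h, w, hw⟩
    exact ⟨.cons h w, by simp [hw]⟩

lemma SimpleGraph.cycleGraph_adj_iff_val {n : ℕ} (hn : 3 ≤ n) (a b : Fin n) :
    (cycleGraph n).Adj a b ↔ a.val + 1 = b.val ∨ b.val + 1 = a.val ∨
      (a.val = 0 ∧ b.val + 1 = n) ∨ (b.val = 0 ∧ a.val + 1 = n) := by
  have hval : ∀ x y : Fin n, (x - y).val = if y ≤ x then x.val - y.val else n + x.val - y.val := by
    intro x y
    split_ifs with h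
    · exact Fin.coe_sub_iff_le.mpr h
    · exact Fin.coe_sub_iff_lt.mpr (not_le.mp h)
  have ha := a.isLt
  have hb := b.isLt
  rw [cycleGraph_adj', hval, hval]
  split_ifs <;> simp only [Fin.le_iff_val_le_val] at * <;> omega

section Bipartition

variable {X : SimpleGraph V} {P Q : Set V}

lemma IsBipartition.mem_iff_notMem_of_adj (h : IsBipartition X P Q) {u v : V} (huv : X.Adj u v) :
    u ∈ P ↔ v ∉ P := by
  have hPQ := Set.disjoint_left.mp h.2.1
  rcases h.2.2 u v huv with ⟨hu, hv⟩ | ⟨hu, hv⟩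
  · exact ⟨fun _ hvP => hPQ hvP hv, fun _ => hu⟩
  · exact ⟨fun huP => absurd hu (hPQ huP), fun hvP => absurd hv hvP⟩

lemma IsBipartition.even_length_iff (h : IsBipartition X P Q) {u v : V} (w : X.Walk u v) :
    Even w.length ↔ (u ∈ P ↔ v ∈ P) := by
  induction w with
  | nil => simp
  | cons huv _ ih =>
    rw [Walk.length_cons, Nat.even_add_one, ih, h.mem_iff_notMem_of_adj huv]
    tauto

end Bipartition

section InducedPath

variable (X : SimpleGraph V)

def IsInducedPath (L : ℕ) (f : ℕ → V) : Prop :=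
  ∀ i ≤ L, ∀ j ≤ L, X.Adj (f i) (f j) ↔ i + 1 = j ∨ j + 1 = i

def consSeq (w : V) (f : ℕ → V) : ℕ → V
  | 0 => w
  | i + 1 => f i

variable {X}

lemma IsInducedPath.mono {L L' : ℕ} {f : ℕ → V} (hf : IsInducedPath X L f) (h : L' ≤ L) :
    IsInducedPath X L' f :=
  fun i hi j hj => hf i (hi.trans h) j (hj.trans h)

lemma isInducedPath_consSeq {L : ℕ} {f : ℕ → V} {w : V} (hf : IsInducedPath X L f)
    (hw : ∀ j ≤ L, X.Adj w (f j) ↔ j = 0) : IsInducedPath X (L + 1) (consSeq w f) := by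
  rintro (_ | i) hi (_ | j) hj
  · simp [consSeq]
  · rw [consSeq, consSeq, hw j (by omega)]
    omega
  · rw [consSeq, consSeq, X.adj_comm, hw i (by omega)]
    omega
  · rw [consSeq, consSeq, hf i (by omega) j (by omega)]
    omega

lemma IsInducedPath.injOn {L : ℕ} {f : ℕ → V} (hf : IsInducedPath X L f) (hL : 3 ≤ L) :
    Set.InjOn f (Set.Iic L) := by
  have key : ∀ i j, i < j → j ≤ L → f i ≠ f j := by
    intro i j hij hjL heq
    have hnb : ∀ k ≤ L, (i + 1 = k ∨ k + 1 = i) ↔ (j + 1 = k ∨ k + 1 = j) := fun k hk => by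
      rw [← hf i (by omega) k hk, ← hf j hjL k hk, heq]
    rcases Nat.lt_or_ge j L with h | h
    · have := (hnb (j + 1) (by omega)).mpr (Or.inl rfl)
      omega
    · rcases Nat.eq_zero_or_pos i with h0 | h0
      · have := (hnb 1 (by omega)).mp (Or.inl (by omega))
        omega
      · have := (hnb (i - 1) (by omega)).mp (Or.inr (by omega))
        omega
  intro i hi j hj heq
  rcases lt_trichotomy i j with h | h | h
  · exact absurd heq (key i j h hj)
  · exact h
  · exact absurd heq.symm (key j i h hi)

lemma IsInducedPath.lt_card [Finite V] {L : ℕ} {f : ℕ → V} (hf : IsInducedPath X L f)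
    (hL : 3 ≤ L) : L < Nat.card V := by
  have hinj : Function.Injective fun i : Fin (L + 1) => f i :=
    fun a b hab => Fin.ext (hf.injOn hL (Nat.le_of_lt_succ a.2) (Nat.le_of_lt_succ b.2) hab)
  simpa using Nat.card_le_card_of_injective _ hinj

end InducedPath

def UniformDegreeInto (X : SimpleGraph V) (A B : Set V) : Prop :=
  ∀ x ∈ A, ∀ y ∈ A, (X.neighborSet x ∩ B).ncard = (X.neighborSet y ∩ B).ncard

lemma UniformDegreeInto.nonempty [Finite V] {X : SimpleGraph V} {A B : Set V}
    (h : UniformDegreeInto X A B) {u v : V} (hu : u ∈ A) (hv : v ∈ B) (huv : X.Adj u v) :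
    ∀ x ∈ A, (X.neighborSet x ∩ B).Nonempty := by
  intro x hx
  rw [← Set.ncard_pos, h x hx u hu, Set.ncard_pos]
  exact ⟨v, huv, hv⟩

section Chordal

variable {X : SimpleGraph V}

lemma NoLongInducedCycle.false_of_isInducedPath (hX : NoLongInducedCycle X) {L : ℕ}
    {f : ℕ → V} {w : V} (hf : IsInducedPath X L f) (hL : 4 ≤ L)
    (hw : ∀ j ≤ L, X.Adj w (f j) ↔ j = 0 ∨ j = L) : False := by
  have hwf : ∀ j ≤ L, w ≠ f j := by
    rintro j hj rfl
    have h0 := (hf j hj 0 (by omega)).mp ((hw 0 (by omega)).mpr (Or.inl rfl))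
    have hL' := (hf j hj L le_rfl).mp ((hw L le_rfl).mpr (Or.inr rfl))
    omega
  have hinj : ∀ i < L + 2, ∀ j < L + 2, consSeq w f i = consSeq w f j → i = j := by
    rintro (_ | i) hi (_ | j) hj hij
    · rfl
    · exact absurd hij (hwf j (by omega))
    · exact absurd hij.symm (hwf i (by omega))
    · simpa using hf.injOn (by omega) (Set.mem_Iic.mpr (by omega)) (Set.mem_Iic.mpr (by omega)) hij
  have hadj : ∀ i < L + 2, ∀ j < L + 2, X.Adj (consSeq w f i) (consSeq w f j) ↔
      i + 1 = j ∨ j + 1 = i ∨ (i = 0 ∧ j + 1 = L + 2) ∨ (j = 0 ∧ i + 1 = L + 2) := by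
    rintro (_ | i) hi (_ | j) hj
    · simp [consSeq]
    · rw [consSeq, consSeq, hw j (by omega)]
      omega
    · rw [consSeq, consSeq, X.adj_comm, hw i (by omega)]
      omega
    · rw [consSeq, consSeq, hf i (by omega) j (by omega)]
      omega
  exact (hX (L + 2) (by omega)).false
    ⟨⟨fun a => consSeq w f a, fun a b hab => Fin.ext (hinj _ a.2 _ b.2 hab)⟩, fun {a b} =>
      (hadj a a.2 b b.2).trans (cycleGraph_adj_iff_val (by omega) a b).symm⟩

-- The first vertex `f j` with `2 ≤ j` seen by `w` closes an induced cycle of length `j + 2`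
-- (`j ≠ 3` as `B` is independent), so `j = 2`.
lemma NoLongInducedCycle.adj_two_of_adj (hX : NoLongInducedCycle X) {B : Set V}
    (hB : X.IsIndepSet B) {m : ℕ} {f : ℕ → V} (hf : IsInducedPath X m f) (h1 : f 1 ∈ B)
    (h3 : f 3 ∈ B) {w : V} (hwB : w ∈ B) (hw0 : X.Adj w (f 0)) {j : ℕ} (hjm : j ≤ m)
    (hj0 : 0 < j) (hj : X.Adj w (f j)) : X.Adj w (f 2) := by
  classical
  have hex : ∃ j, 2 ≤ j ∧ j ≤ m ∧ X.Adj w (f j) := by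
    have hj1 : j ≠ 1 := by
      rintro rfl
      exact hB.not_adj hwB h1 hj
    exact ⟨j, by omega, hjm, hj⟩
  obtain ⟨hn2, hnm, hn⟩ := Nat.find_spec hex
  have hmin : ∀ k, 2 ≤ k → k < Nat.find hex → ¬X.Adj w (f k) :=
    fun k hk hkn hadj => Nat.find_min hex hkn ⟨hk, by omega, hadj⟩
  have hn3 : Nat.find hex ≠ 3 := fun h => hB.not_adj hwB h3 (h ▸ hn)
  by_contra hw2
  have hn2' : Nat.find hex ≠ 2 := fun h => hw2 (h ▸ hn)
  refine hX.false_of_isInducedPath (w := w) (hf.mono hnm) (by omega) fun l hl =>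
    ⟨fun hl' => ?_, ?_⟩
  · by_contra hne
    rcases Nat.lt_or_ge l 2 with h | h
    · exact hB.not_adj hwB h1 ((show l = 1 by omega) ▸ hl')
    · exact hmin l h (by omega) hl'
  · rintro (rfl | rfl)
    exacts [hw0, hn]

lemma NoLongInducedCycle.exists_extension [Finite V] (hX : NoLongInducedCycle X)
    {A B : Set V} (hB : X.IsIndepSet B) (hdeg : UniformDegreeInto X A B) {m : ℕ}
    {f : ℕ → V} (hf : IsInducedPath X m f) (hm : 3 ≤ m)
    (h0 : f 0 ∈ A) (h1 : f 1 ∈ B) (h2 : f 2 ∈ A) (h3 : f 3 ∈ B) :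
    ∃ w ∈ B, X.Adj w (f 0) ∧ ∀ j ≤ m, 0 < j → ¬X.Adj w (f j) := by
  by_contra! hcon
  have hsub : X.neighborSet (f 0) ∩ B ⊆ X.neighborSet (f 2) ∩ B := by
    rintro w ⟨hw0, hwB⟩
    obtain ⟨j, hjm, hj0, hj⟩ := hcon w hwB hw0.symm
    exact ⟨(hX.adj_two_of_adj hB hf h1 h3 hwB hw0.symm hjm hj0 hj).symm, hwB⟩
  have heq := Set.eq_of_subset_of_ncard_le hsub (hdeg _ h2 _ h0).le
  have h03 : X.Adj (f 0) (f 3) := (heq ▸ ⟨(hf 2 (by omega) 3 hm).mpr (Or.inl rfl), h3⟩ :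
    f 3 ∈ X.neighborSet (f 0) ∩ B).1
  have := (hf 0 (by omega) 3 hm).mp h03
  omega

lemma NoLongInducedCycle.exists_isInducedPath_add [Finite V] (hX : NoLongInducedCycle X)
    {A B : Set V} (hA : X.IsIndepSet A) (hB : X.IsIndepSet B)
    (hdegA : UniformDegreeInto X A B) (hdegB : UniformDegreeInto X B A) (k : ℕ) {m : ℕ}
    {f : ℕ → V} (hf : IsInducedPath X m f) (hm : 3 ≤ m)
    (h0 : f 0 ∈ A) (h1 : f 1 ∈ B) (h2 : f 2 ∈ A) (h3 : f 3 ∈ B) :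
    ∃ g, IsInducedPath X (m + k) g := by
  induction k generalizing A B m f with
  | zero => exact ⟨f, hf⟩
  | succ k ih =>
    obtain ⟨w, hwB, hw0, hw⟩ := hX.exists_extension hB hdegA hf hm h0 h1 h2 h3
    have hg : IsInducedPath X (m + 1) (consSeq w f) := isInducedPath_consSeq hf fun j hj =>
      ⟨fun h => by_contra fun hj0 => hw j hj (by omega) h, by rintro rfl; exact hw0⟩
    obtain ⟨g, hg⟩ := ih hB hA hdegB hdegA hg (by omega) hwB h0 h1 h2
    exact ⟨g, (by omega : m + 1 + k = m + (k + 1)) ▸ hg⟩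

end Chordal

/-- The last field says that the bipartite graph between the independent sets `A` and `B` has no
induced path on four vertices, i.e. it is a disjoint union of complete bipartite graphs. -/
structure IsBicliqueUnion (X : SimpleGraph V) (A B : Set V) : Prop where
  disjoint : Disjoint A B
  isIndepSet_left : X.IsIndepSet A
  isIndepSet_right : X.IsIndepSet B
  adj_of_adj_of_adj : ∀ a ∈ A, ∀ a' ∈ A, ∀ b ∈ B, ∀ b' ∈ B,
    X.Adj a b → X.Adj a' b → X.Adj a' b' → X.Adj a b'

section Bicliques

variable {X : SimpleGraph V} {A B W : Set V}

lemma IsBicliqueUnion.symm (h : IsBicliqueUnion X A B) : IsBicliqueUnion X B A where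
  disjoint := h.disjoint.symm
  isIndepSet_left := h.isIndepSet_right
  isIndepSet_right := h.isIndepSet_left
  adj_of_adj_of_adj b hb b' hb' a ha a' ha' hab hb'a hb'a' :=
    (h.adj_of_adj_of_adj a' ha' a ha b' hb' b hb hb'a'.symm hb'a.symm hab.symm).symm

lemma NoLongInducedCycle.isBicliqueUnion [Finite V] (hX : NoLongInducedCycle X)
    (hAB : Disjoint A B) (hA : X.IsIndepSet A) (hB : X.IsIndepSet B)
    (hdegA : UniformDegreeInto X A B) (hdegB : UniformDegreeInto X B A) :
    IsBicliqueUnion X A B := by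
  refine ⟨hAB, hA, hB, fun a ha a' ha' b hb b' hb' hab ha'b ha'b' => ?_⟩
  by_contra hab'
  have h₁ : IsInducedPath X 0 fun _ => a := fun i hi j hj => by
    simp [show i = 0 by omega, show j = 0 by omega]
  have h₂ := isInducedPath_consSeq (w := b) h₁ fun j hj => by
    simp [show j = 0 by omega, hab.symm]
  have h₃ := isInducedPath_consSeq (w := a') h₂ fun j hj => by
    interval_cases j <;> simp [consSeq, ha'b, hA.not_adj ha' ha]
  have h₄ := isInducedPath_consSeq (w := b') h₃ fun j hj => by
    interval_cases j <;>
      simp [consSeq, ha'b'.symm, hB.not_adj hb' hb, (mt Adj.symm hab' : ¬X.Adj b' a)]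
  obtain ⟨g, hg⟩ := hX.exists_isInducedPath_add hB hA hdegB hdegA (Nat.card V) h₄ le_rfl
    hb' ha' hb ha
  have := hg.lt_card (by omega)
  omega

-- The vertex set `W = A ∪ B` is a separate variable so that these lemmas also apply to `B ∪ A`.
lemma IsBicliqueUnion.image_supp_eq_neighborSet (h : IsBicliqueUnion X A B) (hW : A ∪ B = W)
    {K : (X.induce W).ConnectedComponent} {x : W} (hx : x ∈ K.supp) (hxA : (x : V) ∈ A) :
    Subtype.val '' {v | v ∈ K.supp ∧ (v : V) ∈ B} = X.neighborSet x ∩ B := by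
  have hmemW : ∀ y : W, (y : V) ∈ A ∨ (y : V) ∈ B := fun y => hW.symm ▸ y.2
  let S : Set W := {y | ((y : V) ∈ A ∧ X.neighborSet y ∩ B = X.neighborSet x ∩ B) ∨
    ((y : V) ∈ B ∧ X.Adj x y)}
  have hS : ∀ y z, y ∈ S → (X.induce W).Adj y z → z ∈ S := by
    rintro y z (⟨hyA, hy⟩ | ⟨hyB, hxy⟩) hyz
    · have hzB : (z : V) ∈ B :=
        (hmemW z).resolve_left fun hzA => h.isIndepSet_left.not_adj hyA hzA hyz
      exact Or.inr ⟨hzB, (hy ▸ ⟨hyz, hzB⟩ : (z : V) ∈ X.neighborSet x ∩ B).1⟩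
    · have hzA : (z : V) ∈ A :=
        (hmemW z).resolve_right fun hzB => h.isIndepSet_right.not_adj hyB hzB hyz
      refine Or.inl ⟨hzA, Set.ext fun b => and_congr_left fun hb => ⟨fun hzb => ?_, fun hxb => ?_⟩⟩
      · exact h.adj_of_adj_of_adj x hxA z hzA y hyB b hb hxy hyz.symm hzb
      · exact h.adj_of_adj_of_adj z hzA x hxA y hyB b hb hyz.symm hxy hxb
  ext b
  constructor
  · rintro ⟨v, ⟨hv, hvB⟩, rfl⟩
    rcases (ConnectedComponent.exact (hx.trans hv.symm)).mem_of_adj_closed hS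
      (Or.inl ⟨hxA, rfl⟩) with ⟨hvA, -⟩ | ⟨-, hxv⟩
    · exact absurd hvB (Set.disjoint_left.mp h.disjoint hvA)
    · exact ⟨hxv, hvB⟩
  · rintro ⟨hxb, hbB⟩
    have hbW : b ∈ W := hW ▸ Or.inr hbB
    have hxb' : (X.induce W).Adj x ⟨b, hbW⟩ := hxb
    exact ⟨⟨b, hbW⟩, ⟨(ConnectedComponent.sound hxb'.reachable).symm.trans hx, hbB⟩, rfl⟩

lemma IsBicliqueUnion.ncard_supp_eq (h : IsBicliqueUnion X A B) (hW : A ∪ B = W)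
    {K : (X.induce W).ConnectedComponent} {x : W} (hx : x ∈ K.supp) (hxA : (x : V) ∈ A) :
    {v | v ∈ K.supp ∧ (v : V) ∈ B}.ncard = (X.neighborSet x ∩ B).ncard := by
  rw [← h.image_supp_eq_neighborSet hW hx hxA,
    Set.ncard_image_of_injective _ Subtype.val_injective]

lemma IsBicliqueUnion.exists_mem_supp (h : IsBicliqueUnion X A B) (hW : A ∪ B = W)
    (hnbB : ∀ b ∈ B, (X.neighborSet b ∩ A).Nonempty) (K : (X.induce W).ConnectedComponent) :
    ∃ u ∈ K.supp, (u : V) ∈ A := by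
  obtain ⟨x, hx⟩ := K.nonempty_supp
  rcases (hW.symm ▸ x.2 : (x : V) ∈ A ∪ B) with hxA | hxB
  · exact ⟨x, hx, hxA⟩
  · obtain ⟨a, ha⟩ := hnbB x hxB
    rw [← h.symm.image_supp_eq_neighborSet ((Set.union_comm B A).trans hW) hx hxB] at ha
    obtain ⟨u, ⟨hu, huA⟩, -⟩ := ha
    exact ⟨u, hu, huA⟩

lemma IsBicliqueUnion.card_connectedComponent (h : IsBicliqueUnion X A B)
    (hnbA : ∀ a ∈ A, (X.neighborSet a ∩ B).Nonempty)
    (hnbB : ∀ b ∈ B, (X.neighborSet b ∩ A).Nonempty) :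
    Nat.card (X.induce (A ∪ B)).ConnectedComponent = numClasses X A B := by
  let F : (X.induce (A ∪ B)).ConnectedComponent → Set V :=
    fun K => Subtype.val '' {v | v ∈ K.supp ∧ (v : V) ∈ B}
  have hrange : Set.range F = (fun a => X.neighborSet a ∩ B) '' A := by
    ext s
    constructor
    · rintro ⟨K, rfl⟩
      obtain ⟨x, hx, hxA⟩ := h.exists_mem_supp rfl hnbB K
      exact ⟨x, hxA, (h.image_supp_eq_neighborSet rfl hx hxA).symm⟩
    · rintro ⟨a, ha, rfl⟩
      exact ⟨_, h.image_supp_eq_neighborSet rfl (x := ⟨a, Or.inl ha⟩) rfl ha⟩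
  have hinj : F.Injective := by
    intro K K' hKK'
    obtain ⟨v, hv, hvB⟩ := h.symm.exists_mem_supp (Set.union_comm B A) hnbA K
    obtain ⟨v', ⟨hv', -⟩, hvv'⟩ : (v : V) ∈ F K' := hKK' ▸ ⟨v, ⟨hv, hvB⟩, rfl⟩
    rw [Subtype.ext hvv'] at hv'
    exact hv.symm.trans hv'
  rw [← Set.ncard_range_of_injective hinj, hrange]
  rfl

theorem IsBicliqueUnion.induce_union_components [Finite V] (h : IsBicliqueUnion X A B)
    (hdegA : UniformDegreeInto X A B) (hdegB : UniformDegreeInto X B A)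
    (hedge : ∃ u ∈ A, ∃ v ∈ B, X.Adj u v) :
    ∃ a b : ℕ, 1 ≤ a ∧ 1 ≤ b ∧
      (∀ K : (X.induce (A ∪ B)).ConnectedComponent,
        {v : ↥(A ∪ B) | v ∈ K.supp ∧ (v : V) ∈ A}.ncard = a ∧
        {v : ↥(A ∪ B) | v ∈ K.supp ∧ (v : V) ∈ B}.ncard = b ∧
        ∀ u ∈ K.supp, ∀ v ∈ K.supp, (u : V) ∈ A → (v : V) ∈ B → X.Adj u v) ∧
      Nat.card (X.induce (A ∪ B)).ConnectedComponent = numClasses X A B := by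
  obtain ⟨δ, hδ, γ, hγ, hδγ⟩ := hedge
  have hnbA := hdegA.nonempty hδ hγ hδγ
  have hnbB := hdegB.nonempty hγ hδ hδγ.symm
  refine ⟨_, _, (Set.ncard_pos (Set.toFinite _)).mpr (hnbB γ hγ),
    (Set.ncard_pos (Set.toFinite _)).mpr (hnbA δ hδ), fun K => ?_,
    h.card_connectedComponent hnbA hnbB⟩
  obtain ⟨u, hu, huA⟩ := h.exists_mem_supp rfl hnbB K
  obtain ⟨v, hv, hvB⟩ := h.symm.exists_mem_supp (Set.union_comm B A) hnbA K
  refine ⟨?_, ?_, fun x hx y hy hxA hyB => ?_⟩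
  · rw [h.symm.ncard_supp_eq (Set.union_comm B A) hv hvB]
    exact hdegB _ hvB _ hγ
  · rw [h.ncard_supp_eq rfl hu huA]
    exact hdegA _ huA _ hδ
  · exact (h.image_supp_eq_neighborSet rfl hx hxA ▸ ⟨y, ⟨hy, hyB⟩, rfl⟩ :
      (y : V) ∈ X.neighborSet x ∩ B).1

end Bicliques

end

namespace CoherentConfiguration

variable {Ω : Type*} (C : CoherentConfiguration Ω)

def IsBasisUnion (R : Set (Ω × Ω)) : Prop :=
  ∀ s ∈ C.S, (s ∩ R).Nonempty → s ⊆ R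

lemma eq_of_mem_of_mem {s s' : Set (Ω × Ω)} (hs : s ∈ C.S) (hs' : s' ∈ C.S) {p : Ω × Ω}
    (hp : p ∈ s) (hp' : p ∈ s') : s = s' :=
  (C.partition p).unique ⟨hs, hp⟩ ⟨hs', hp'⟩

lemma exists_mem (p : Ω × Ω) : ∃ s ∈ C.S, p ∈ s :=
  (C.partition p).exists

variable {C}

lemma isBasisUnion_diag : C.IsBasisUnion {p | p.1 = p.2} :=
  fun s hs ⟨p, hp, hpd⟩ => C.diag_union s hs ⟨p, hp, hpd⟩

lemma Compatible.isBasisUnion_adj {X : SimpleGraph Ω} (h : C.Compatible X) :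
    C.IsBasisUnion {p | X.Adj p.1 p.2} :=
  fun s hs ⟨p, hp, hpX⟩ => h s hs ⟨p, hp, hpX⟩

lemma IsFiber.nonempty {Δ : Set Ω} (hΔ : C.IsFiber Δ) : Δ.Nonempty := by
  obtain ⟨p, -, hp⟩ := C.nonempty_mem _ hΔ
  exact ⟨p.1, hp⟩

lemma IsFiber.disjoint {Δ Γ : Set Ω} (hΔ : C.IsFiber Δ) (hΓ : C.IsFiber Γ) (hne : Δ ≠ Γ) :
    Disjoint Δ Γ := by
  refine Set.disjoint_left.mpr fun ω hωΔ hωΓ => hne ?_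
  have h := C.eq_of_mem_of_mem hΔ hΓ (p := (ω, ω)) ⟨rfl, hωΔ⟩ ⟨rfl, hωΓ⟩
  ext δ
  simpa using congrArg (((δ, δ) : Ω × Ω) ∈ ·) h

variable [Finite Ω]

lemma nonempty_of_mem_of_nonempty {r s t : Set (Ω × Ω)} (hr : r ∈ C.S) (hs : s ∈ C.S)
    (ht : t ∈ C.S) {p q : Ω × Ω} (hp : p ∈ t) (hq : q ∈ t)
    (h : {γ | (p.1, γ) ∈ r ∧ (γ, p.2) ∈ s}.Nonempty) :
    {γ | (q.1, γ) ∈ r ∧ (γ, q.2) ∈ s}.Nonempty := by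
  rw [← Set.ncard_pos] at h ⊢
  rwa [← C.regularity r hr s hs t ht p hp q hq]

lemma IsBasisUnion.comp {R R' : Set (Ω × Ω)} (h : C.IsBasisUnion R) (h' : C.IsBasisUnion R') :
    C.IsBasisUnion {p | ∃ γ, (p.1, γ) ∈ R ∧ (γ, p.2) ∈ R'} := by
  rintro s hs ⟨p, hp, γ, hγ, hγ'⟩ q hq
  obtain ⟨r, hr, hpr⟩ := C.exists_mem (p.1, γ)
  obtain ⟨r', hr', hpr'⟩ := C.exists_mem (γ, p.2)
  obtain ⟨γ', hγ'r, hγ'r'⟩ := nonempty_of_mem_of_nonempty hr hr' hs hp hq ⟨γ, hpr, hpr'⟩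
  exact ⟨γ', h r hr ⟨_, hpr, hγ⟩ hγ'r, h' r' hr' ⟨_, hpr', hγ'⟩ hγ'r'⟩

lemma IsBasisUnion.ncard_comp_eq {R s t : Set (Ω × Ω)} (hR : C.IsBasisUnion R) (hs : s ∈ C.S)
    (ht : t ∈ C.S) {p q : Ω × Ω} (hp : p ∈ t) (hq : q ∈ t) :
    {γ | (p.1, γ) ∈ R ∧ (γ, p.2) ∈ s}.ncard = {γ | (q.1, γ) ∈ R ∧ (γ, q.2) ∈ s}.ncard := by
  let T := {r | r ∈ C.S ∧ r ⊆ R}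
  have hsplit : ∀ x : Ω × Ω, {γ | (x.1, γ) ∈ R ∧ (γ, x.2) ∈ s} =
      ⋃ r ∈ T, {γ | (x.1, γ) ∈ r ∧ (γ, x.2) ∈ s} := by
    intro x
    ext γ
    simp only [Set.mem_ofPred_eq, Set.mem_iUnion, exists_prop, T]
    constructor
    · rintro ⟨hγR, hγs⟩
      obtain ⟨r, hr, hxr⟩ := C.exists_mem (x.1, γ)
      exact ⟨r, ⟨hr, hR r hr ⟨_, hxr, hγR⟩⟩, hxr, hγs⟩
    · rintro ⟨r, ⟨-, hrR⟩, hxr, hγs⟩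
      exact ⟨hrR hxr, hγs⟩
  have hdisj : ∀ x : Ω × Ω, T.PairwiseDisjoint fun r => {γ | (x.1, γ) ∈ r ∧ (γ, x.2) ∈ s} :=
    fun x r hr r' hr' hne => Set.disjoint_left.mpr fun γ hγ hγ' =>
      hne (C.eq_of_mem_of_mem hr.1 hr'.1 hγ.1 hγ'.1)
  rw [hsplit p, hsplit q, (Set.toFinite T).ncard_biUnion (fun _ _ => Set.toFinite _) (hdisj p),
    (Set.toFinite T).ncard_biUnion (fun _ _ => Set.toFinite _) (hdisj q)]
  exact finsum_mem_congr rfl fun r hr => C.regularity r hr.1 s hs t ht p hp q hq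

lemma Compatible.isBasisUnion_walk_length {X : SimpleGraph Ω} (h : C.Compatible X) (k : ℕ) :
    C.IsBasisUnion {p | ∃ w : X.Walk p.1 p.2, w.length = k} := by
  induction k with
  | zero =>
    convert isBasisUnion_diag (C := C) using 2
    ext ⟨u, v⟩
    refine ⟨fun ⟨w, hw⟩ => w.eq_of_length_eq_zero hw, ?_⟩
    rintro (rfl : u = v)
    exact ⟨.nil, rfl⟩
  | succ k ih =>
    convert h.isBasisUnion_adj.comp ih using 1
    ext p
    exact exists_walk_length_add_one_iff

lemma Distinguished.prod_mem {α : Ω} (hα : C.Distinguished α) {Δ : Set Ω} (hΔ : C.IsFiber Δ) :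
    {p : Ω × Ω | p.1 = α ∧ p.2 ∈ Δ} ∈ C.S := by
  obtain ⟨β, hβ⟩ := hΔ.nonempty
  obtain ⟨s, hs, hαβ⟩ := C.exists_mem (α, β)
  have hsub : s ⊆ {p | p.1 = α ∧ p.2 ∈ Δ} := by
    rintro ⟨x, y⟩ hxy
    obtain ⟨γ, hγ, -⟩ := nonempty_of_mem_of_nonempty hα hs hs hαβ hxy ⟨α, rfl, hαβ⟩
    obtain ⟨γ', -, hγ'y, hγ'Δ⟩ := nonempty_of_mem_of_nonempty hs hΔ hs hαβ hxy ⟨β, hαβ, rfl, hβ⟩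
    exact ⟨(Prod.mk.inj hγ).1, hγ'y ▸ hγ'Δ⟩
  have hsup : {p | p.1 = α ∧ p.2 ∈ Δ} ⊆ s := by
    rintro ⟨x, β'⟩ ⟨hx, hβ'⟩
    obtain rfl : x = α := hx
    obtain ⟨γ, hγ, hγ'⟩ := nonempty_of_mem_of_nonempty (C.converse_mem s hs) hs hΔ
      (p := (β, β)) (q := (β', β')) ⟨rfl, hβ⟩ ⟨rfl, hβ'⟩ ⟨x, hαβ, hαβ⟩
    obtain rfl : γ = x := (hsub hγ').1
    exact hγ'
  rwa [← hsub.antisymm hsup]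

lemma Distinguished.uniformDegreeInto {X : SimpleGraph Ω} (hcomp : C.Compatible X) {α : Ω}
    (hα : C.Distinguished α) {Δ Γ : Set Ω} (hΔ : C.IsFiber Δ) (hΓ : C.IsFiber Γ) :
    UniformDegreeInto X Δ Γ := by
  intro δ hδ δ' hδ'
  -- `|N(x) ∩ Γ|` is an intersection number at `(x, α)`, and `Δ × {α}` is a basis relation.
  have hN : ∀ x, X.neighborSet x ∩ Γ = {γ | ((x, α).1, γ) ∈ {p : Ω × Ω | X.Adj p.1 p.2} ∧
      (γ, (x, α).2) ∈ {p : Ω × Ω | (p.2, p.1) ∈ {p : Ω × Ω | p.1 = α ∧ p.2 ∈ Γ}}} := by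
    intro x
    ext γ
    simp [and_comm]
  rw [hN, hN]
  exact hcomp.isBasisUnion_adj.ncard_comp_eq (C.converse_mem _ (hα.prod_mem hΓ))
    (C.converse_mem _ (hα.prod_mem hΔ)) ⟨rfl, hδ⟩ ⟨rfl, hδ'⟩

lemma Distinguished.isIndepSet {X : SimpleGraph Ω} {P Q : Set Ω} (hconn : X.Connected)
    (hbip : IsBipartition X P Q) (hcomp : C.Compatible X) {α : Ω} (hα : C.Distinguished α)
    {Δ : Set Ω} (hΔ : C.IsFiber Δ) : X.IsIndepSet Δ := by
  intro δ hδ δ' hδ' _ hadj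
  obtain ⟨w⟩ := hconn α δ
  -- `(α, δ)` and `(α, δ')` lie in the same basis relation, so both are joined by walks of
  -- the same length, and hence lie on the same side of the bipartition.
  have hsub := hcomp.isBasisUnion_walk_length w.length _ (hα.prod_mem hΔ)
    ⟨(α, δ), ⟨rfl, hδ⟩, w, rfl⟩
  obtain ⟨w', hw'⟩ : ∃ w' : X.Walk α δ', w'.length = w.length := hsub (a := (α, δ')) ⟨rfl, hδ'⟩
  have h := hbip.even_length_iff w
  have h' := hbip.even_length_iff w'
  rw [hw'] at h'
  have := hbip.mem_iff_notMem_of_adj hadj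
  tauto

end CoherentConfiguration

theorem stmt_7 {Ω : Type*} [Fintype Ω] (X : SimpleGraph Ω) (P Q : Set Ω)
    (hconn : X.Connected) (hbip : IsBipartition X P Q) (hchordal : NoLongInducedCycle X)
    (α : Ω) (C : CoherentConfiguration Ω)
    (hcomp : C.Compatible X) (hdist : C.Distinguished α)
    (Δ Γ : Set Ω) (hΔ : C.IsFiber Δ) (hΓ : C.IsFiber Γ) (hne : Δ ≠ Γ)
    (hedge : ∃ u ∈ Δ, ∃ v ∈ Γ, X.Adj u v) :
    ∃ a b : ℕ, 1 ≤ a ∧ 1 ≤ b ∧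
      (∀ K : (X.induce (Δ ∪ Γ)).ConnectedComponent,
        {v : ↥(Δ ∪ Γ) | v ∈ K.supp ∧ (v : Ω) ∈ Δ}.ncard = a ∧
        {v : ↥(Δ ∪ Γ) | v ∈ K.supp ∧ (v : Ω) ∈ Γ}.ncard = b ∧
        ∀ u ∈ K.supp, ∀ v ∈ K.supp, (u : Ω) ∈ Δ → (v : Ω) ∈ Γ → X.Adj u v) ∧
      Nat.card (X.induce (Δ ∪ Γ)).ConnectedComponent = numClasses X Δ Γ := by
  have hdegΔ := hdist.uniformDegreeInto hcomp hΔ hΓ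
  have hdegΓ := hdist.uniformDegreeInto hcomp hΓ hΔ
  have hbic := hchordal.isBicliqueUnion (hΔ.disjoint hΓ hne)
    (hdist.isIndepSet hconn hbip hcomp hΔ) (hdist.isIndepSet hconn hbip hcomp hΓ) hdegΔ hdegΓ
  exact hbic.induce_union_components hdegΔ hdegΓ hedge
end
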